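/- arXiv:2605.30146 — 3 statements merged into one kernel-verified Lean document; each statement's English description precedes it below -/
import Mathlib

section
/- Let K : ℝ^m × ℝ^m → ℂ be measurable and satisfy the symmetry condition K(p,q) = conj(K(−p,−q)) for all p, q ∈ ℝ^m, let f : ℝ^m → ℂ be measurable, and define g : ℝ^m → ℂ by g(p) := conj(f(−p)) − i·𝔣·|p|². Then the forward maps coincide: F(g)(x,y) = F(f)(x,y) for all x, y ∈ ℝ^m (non-uniqueness of the phase retrieval problem caused by twisted symmetry). -/
open MeasureTheory Complex

noncomputable section

/-- `ℝ^m` with its Euclidean structure. -/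
abbrev Em (m : ℕ) := EuclideanSpace ℝ (Fin m)

/-- The chirp function `n_𝔣(x) = exp(i·𝔣·|x|²/2)`. -/
def chirp (m : ℕ) (fr : ℝ) (x : Em m) : ℂ :=
  Complex.exp (Complex.I * fr * (‖x‖ : ℂ) ^ 2 / 2)

/-- The twisted kernel
`K_f(p,q) = 𝔣^m · n_𝔣(p) · e^{f(p)} · K(p,q) · e^{conj(f(q))} · conj(n_𝔣(q))`. -/
def kerF (m : ℕ) (fr : ℝ) (K : Em m → Em m → ℂ) (f : Em m → ℂ) (p q : Em m) : ℂ :=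
  (fr : ℂ) ^ m * chirp m fr p * Complex.exp (f p) * K p q *
    Complex.exp ((starRingEnd ℂ) (f q)) * (starRingEnd ℂ) (chirp m fr q)

/-- The unitary Fourier transform on `ℝ^{2m} = ℝ^m × ℝ^m`,
`𝓕_{2m}(Φ)(ξ,η) = (2π)^{-m} ∫∫ Φ(p,q)·exp(-i(⟨ξ,p⟩+⟨η,q⟩)) dp dq`. -/
def FT2m (m : ℕ) (Φ : Em m → Em m → ℂ) (ξ η : Em m) : ℂ :=
  (((2 * Real.pi) ^ m : ℝ) : ℂ)⁻¹ *
    ∫ p : Em m, ∫ q : Em m,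
      Φ p q * Complex.exp (-Complex.I * ((inner ℝ ξ p : ℝ) + (inner ℝ η q : ℝ)))

/-- The forward map `F(f)(x,y) = |𝓕_{2m}(K_f)(𝔣x, −𝔣y)|²`. -/
def FwdF (m : ℕ) (fr : ℝ) (K : Em m → Em m → ℂ) (f : Em m → ℂ) (x y : Em m) : ℝ :=
  ‖FT2m m (kerF m fr K f) (fr • x) (-(fr • y))‖ ^ 2

/-! The twisted symmetry gives `K_g(p,q) = conj (K_f(-p,-q))`: the factor `exp(-i𝔣|p|²)` in `exp(g p)`
turns the chirp `n_𝔣(p)` into its conjugate. Conjugating and reflecting a kernel conjugates its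
Fourier transform, which leaves the modulus unchanged. -/

section Symmetry

variable {m : ℕ}

theorem chirp_neg (fr : ℝ) (x : Em m) : chirp m fr (-x) = chirp m fr x := by
  simp only [chirp, norm_neg]

theorem chirp_mul_exp_sub (fr : ℝ) (x : Em m) (z : ℂ) :
    chirp m fr x * Complex.exp (z - Complex.I * fr * (‖x‖ : ℂ) ^ 2) =
      (starRingEnd ℂ) (chirp m fr x) * Complex.exp z := by
  simp only [chirp, ← Complex.exp_conj, ← Complex.exp_add, map_div₀, map_mul, map_pow,
    Complex.conj_I, Complex.conj_ofReal, map_ofNat]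
  ring_nf

theorem kerF_eq_conj_kerF_neg (fr : ℝ) {K : Em m → Em m → ℂ}
    (hK : ∀ p q : Em m, K p q = (starRingEnd ℂ) (K (-p) (-q))) {f g : Em m → ℂ}
    (hg : ∀ p : Em m, g p = (starRingEnd ℂ) (f (-p)) - Complex.I * fr * (‖p‖ : ℂ) ^ 2)
    (p q : Em m) :
    kerF m fr K g p q = (starRingEnd ℂ) (kerF m fr K f (-p) (-q)) := by
  have twist (x : Em m) :
      chirp m fr x * Complex.exp (g x) =
        (starRingEnd ℂ) (chirp m fr (-x) * Complex.exp (f (-x))) := by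
    rw [hg, chirp_mul_exp_sub, chirp_neg, map_mul, ← Complex.exp_conj]
  calc kerF m fr K g p q
      = (fr : ℂ) ^ m * (chirp m fr p * Complex.exp (g p)) * K p q *
          (starRingEnd ℂ) (chirp m fr q * Complex.exp (g q)) := by
        simp only [kerF, map_mul, ← Complex.exp_conj]
        ring
    _ = (starRingEnd ℂ) (kerF m fr K f (-p) (-q)) := by
        simp only [twist, hK p q, Complex.conj_conj, kerF, map_mul, map_pow, Complex.conj_ofReal,
          ← Complex.exp_conj]
        ring

theorem integral_integral_neg {G E : Type*} [MeasurableSpace G] [AddGroup G] [MeasurableNeg G]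
    [NormedAddCommGroup E] [NormedSpace ℝ E] (μ ν : Measure G) [μ.IsNegInvariant]
    [ν.IsNegInvariant] (F : G → G → E) :
    ∫ p, ∫ q, F (-p) (-q) ∂ν ∂μ = ∫ p, ∫ q, F p q ∂ν ∂μ := by
  calc ∫ p, ∫ q, F (-p) (-q) ∂ν ∂μ = ∫ p, ∫ q, F (-p) q ∂ν ∂μ := by
        congr 1 with p
        exact integral_neg_eq_self (F (-p)) ν
    _ = ∫ p, ∫ q, F p q ∂ν ∂μ := integral_neg_eq_self (fun p => ∫ q, F p q ∂ν) μ

theorem FT2m_conj_neg (Φ : Em m → Em m → ℂ) (ξ η : Em m) :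
    FT2m m (fun p q => (starRingEnd ℂ) (Φ (-p) (-q))) ξ η = (starRingEnd ℂ) (FT2m m Φ ξ η) := by
  set Ψ : Em m → Em m → ℂ := fun p q =>
    Φ p q * Complex.exp (-Complex.I * ((inner ℝ ξ p : ℝ) + (inner ℝ η q : ℝ)))
  have integrand (p q : Em m) :
      (starRingEnd ℂ) (Φ (-p) (-q)) *
          Complex.exp (-Complex.I * ((inner ℝ ξ p : ℝ) + (inner ℝ η q : ℝ))) =
        (starRingEnd ℂ) (Ψ (-p) (-q)) := by
    rw [map_mul, ← Complex.exp_conj]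
    congr 2
    simp only [map_mul, map_add, map_neg, Complex.conj_I, Complex.conj_ofReal, inner_neg_right]
    push_cast
    ring
  simp only [FT2m, integrand, integral_conj]
  rw [integral_integral_neg, map_mul, map_inv₀, Complex.conj_ofReal]

end Symmetry

theorem nonuniqueness_twisted_symmetry_general {m : ℕ} (fr : ℝ)
    (K : Em m → Em m → ℂ)
    (hK : ∀ p q : Em m, K p q = (starRingEnd ℂ) (K (-p) (-q)))
    (f : Em m → ℂ)
    (g : Em m → ℂ)
    (hg : ∀ p : Em m, g p = (starRingEnd ℂ) (f (-p)) - Complex.I * fr * (‖p‖ : ℂ) ^ 2) :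
    ∀ x y : Em m, FwdF m fr K g x y = FwdF m fr K f x y := by
  intro x y
  have hker : kerF m fr K g = fun p q => (starRingEnd ℂ) (kerF m fr K f (-p) (-q)) :=
    funext₂ (kerF_eq_conj_kerF_neg fr hK hg)
  rw [FwdF, FwdF, hker, FT2m_conj_neg, Complex.norm_conj]

/-- Non-uniqueness of the phase retrieval problem caused by twisted symmetry:
if `K(p,q) = conj(K(-p,-q))` and `g(p) = conj(f(-p)) − i·𝔣·|p|²`, then
`F(g) = F(f)`. -/
theorem nonuniqueness_twisted_symmetry {m : ℕ} (hm : 1 ≤ m) (fr : ℝ) (hfr : 0 < fr)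
    (K : Em m → Em m → ℂ)
    (hKmeas : Measurable fun pq : Em m × Em m => K pq.1 pq.2)
    (hK : ∀ p q : Em m, K p q = (starRingEnd ℂ) (K (-p) (-q)))
    (f : Em m → ℂ) (hf : Measurable f)
    (g : Em m → ℂ)
    (hg : ∀ p : Em m, g p = (starRingEnd ℂ) (f (-p)) - Complex.I * fr * (‖p‖ : ℂ) ^ 2) :
    ∀ x y : Em m, FwdF m fr K g x y = FwdF m fr K f x y :=
  nonuniqueness_twisted_symmetry_general fr K hK f g hg

end
end

section
/- Fourier form of the propagated covariance kernel. Let K : ℝ^m × ℝ^m → ℂ be continuous with compact support and let f : ℝ^m → ℂ be bounded measurable. Write k_𝔣(x) := c_m·(𝔣/(2π))^(m/2)·exp(i·𝔣·|x|²/2) with c_m := exp(−i·m·π/4). Then for all x, y ∈ ℝ^m, ∫_{ℝ^m}∫_{ℝ^m} k_𝔣(x−p)·exp(f(p))·K(p,q)·exp(conj(f(q)))·conj(k_𝔣(y−q)) dp dq = n_𝔣(x) · 𝓕_{2m}(K_f)(𝔣x, −𝔣y) · conj(n_𝔣(y)). -/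
/-!
Expanding `|x - p|² = |x|² - 2⟨x, p⟩ + |p|²` factors the Fresnel kernel as
`k_𝔣(x - p) = c_m (𝔣/2π)^{m/2} n_𝔣(x) n_𝔣(p) e^{-i⟨𝔣x, p⟩}`, and in the product of
`k_𝔣(x - p)` with `conj k_𝔣(y - q)` the constants combine to `𝔣^m / (2π)^m` because `|c_m| = 1`.
Hence the propagated integrand is `n_𝔣(x) conj n_𝔣(y) (2π)^{-m}` times the Fourier integrand
of `K_f` at `(𝔣x, -𝔣y)`. All factors other than `K` are bounded and measurable, so the integrand
is integrable on the product and Fubini lets us swap the two integrals.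
-/

open MeasureTheory Complex

noncomputable section

/-- The Fresnel convolution kernel
`k_𝔣(x) = c_m·(𝔣/(2π))^{m/2}·exp(i·𝔣·|x|²/2)` with `c_m = exp(−i·m·π/4)`. -/
def fresnelKernel (m : ℕ) (fr : ℝ) (x : Em m) : ℂ :=
  Complex.exp (-Complex.I * m * Real.pi / 4) *
    ((fr / (2 * Real.pi)) ^ ((m : ℝ) / 2) : ℝ) *
    Complex.exp (Complex.I * fr * (‖x‖ : ℂ) ^ 2 / 2)

theorem MeasureTheory.Integrable.bdd_mul_mul_bdd {α β 𝕜 : Type*} [MeasurableSpace α]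
    [MeasurableSpace β] {μ : Measure α} {ν : Measure β} [SFinite ν] [NormedRing 𝕜]
    {K : α × β → 𝕜} (hK : Integrable K (μ.prod ν)) {u : α → 𝕜} {v : β → 𝕜}
    (hu : AEStronglyMeasurable u μ) (hv : AEStronglyMeasurable v ν) {Cu Cv : ℝ}
    (hu_le : ∀ p, ‖u p‖ ≤ Cu) (hv_le : ∀ q, ‖v q‖ ≤ Cv) :
    Integrable (fun z => u z.1 * K z * v z.2) (μ.prod ν) :=
  (hK.bdd_mul hu.comp_fst (ae_of_all _ fun z => hu_le z.1)).mul_bdd hv.comp_snd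
    (ae_of_all _ fun z => hv_le z.2)

theorem norm_exp_le_exp_of_norm_le {z : ℂ} {C : ℝ} (h : ‖z‖ ≤ C) : ‖exp z‖ ≤ Real.exp C :=
  (norm_exp_le_exp_norm z).trans (Real.exp_le_exp.2 h)

section Chirp

variable {m : ℕ} {fr : ℝ}

theorem continuous_chirp : Continuous (chirp m fr) := by
  unfold chirp
  fun_prop

theorem norm_chirp (x : Em m) : ‖chirp m fr x‖ = 1 := by
  rw [chirp, norm_exp]
  simp [← ofReal_pow]

theorem chirp_sub (x p : Em m) :
    chirp m fr (x - p) = chirp m fr x * chirp m fr p * exp (-I * (inner ℝ (fr • x) p : ℝ)) := by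
  simp only [chirp, ← exp_add]
  congr 1
  rw [← ofReal_pow, norm_sub_sq_real, real_inner_smul_left]
  push_cast
  ring

theorem conj_chirp_sub (y q : Em m) :
    starRingEnd ℂ (chirp m fr (y - q)) = starRingEnd ℂ (chirp m fr y) *
      starRingEnd ℂ (chirp m fr q) * exp (-I * (inner ℝ (-(fr • y)) q : ℝ)) := by
  rw [chirp_sub, map_mul, map_mul, ← exp_conj, inner_neg_left]
  simp

end Chirp

section FresnelKernel

variable {m : ℕ} {fr : ℝ}

theorem fresnelKernel_eq (x : Em m) :
    fresnelKernel m fr x = exp (-I * m * Real.pi / 4) *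
      ((fr / (2 * Real.pi)) ^ ((m : ℝ) / 2) : ℝ) * chirp m fr x :=
  rfl

theorem continuous_fresnelKernel : Continuous (fresnelKernel m fr) := by
  simp_rw [funext fresnelKernel_eq]
  exact continuous_const.mul continuous_chirp

theorem norm_fresnelKernel (x : Em m) :
    ‖fresnelKernel m fr x‖ = |(fr / (2 * Real.pi)) ^ ((m : ℝ) / 2)| := by
  rw [fresnelKernel_eq, norm_mul, norm_mul, norm_chirp, norm_exp, norm_real, Real.norm_eq_abs]
  simp

theorem fresnelKernel_mul_conj (hfr : 0 < fr) (u v : Em m) :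
    fresnelKernel m fr u * starRingEnd ℂ (fresnelKernel m fr v) =
      (fr : ℂ) ^ m * (((2 * Real.pi) ^ m : ℝ) : ℂ)⁻¹ *
        chirp m fr u * starRingEnd ℂ (chirp m fr v) := by
  set a : ℝ := (fr / (2 * Real.pi)) ^ ((m : ℝ) / 2)
  set c : ℂ := exp (-I * m * Real.pi / 4)
  have hc : c * starRingEnd ℂ c = 1 := by
    rw [mul_conj', norm_exp]
    simp
  have ha : (a : ℂ) * a = (fr : ℂ) ^ m * (((2 * Real.pi) ^ m : ℝ) : ℂ)⁻¹ := by
    rw [← ofReal_mul, ← Real.rpow_add (by positivity), add_halves, Real.rpow_natCast, div_pow]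
    push_cast
    ring
  rw [fresnelKernel_eq, fresnelKernel_eq, map_mul, map_mul, conj_ofReal]
  linear_combination (a * a * chirp m fr u * starRingEnd ℂ (chirp m fr v)) * hc +
    (chirp m fr u * starRingEnd ℂ (chirp m fr v)) * ha

end FresnelKernel

theorem fresnelKernel_sandwich_eq_kerF {m : ℕ} {fr : ℝ} (hfr : 0 < fr) (K : Em m → Em m → ℂ)
    (f : Em m → ℂ) (x y p q : Em m) :
    fresnelKernel m fr (x - p) * exp (f p) * K p q * exp (starRingEnd ℂ (f q)) *
        starRingEnd ℂ (fresnelKernel m fr (y - q)) =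
      chirp m fr x * starRingEnd ℂ (chirp m fr y) * (((2 * Real.pi) ^ m : ℝ) : ℂ)⁻¹ *
        (kerF m fr K f p q *
          exp (-I * ((inner ℝ (fr • x) p : ℝ) + (inner ℝ (-(fr • y)) q : ℝ)))) := by
  calc _ = fresnelKernel m fr (x - p) * starRingEnd ℂ (fresnelKernel m fr (y - q)) *
        (exp (f p) * K p q * exp (starRingEnd ℂ (f q))) := by ring
    _ = _ := by
      rw [fresnelKernel_mul_conj hfr, chirp_sub, conj_chirp_sub, kerF, mul_add, exp_add]
      ring

theorem integrable_fresnelKernel_sandwich {m : ℕ} {fr : ℝ} {K : Em m → Em m → ℂ}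
    (hK : Integrable (fun pq : Em m × Em m => K pq.1 pq.2) (volume.prod volume))
    {f : Em m → ℂ} (hf : Measurable f) {C : ℝ} (hC : ∀ x, ‖f x‖ ≤ C) (x y : Em m) :
    Integrable (Function.uncurry fun p q =>
      fresnelKernel m fr (x - p) * exp (f p) * K p q * exp (starRingEnd ℂ (f q)) *
        starRingEnd ℂ (fresnelKernel m fr (y - q))) (volume.prod volume) := by
  have h := hK.bdd_mul_mul_bdd
    (u := fun p => fresnelKernel m fr (x - p) * exp (f p))
    (v := fun q => exp (starRingEnd ℂ (f q)) * starRingEnd ℂ (fresnelKernel m fr (y - q)))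
    ((continuous_fresnelKernel.comp (continuous_sub_left x)).measurable.mul
      hf.cexp).aestronglyMeasurable
    ((continuous_star.measurable.comp hf).cexp.mul (continuous_star.comp
      (continuous_fresnelKernel.comp (continuous_sub_left y))).measurable).aestronglyMeasurable
    (fun p => by
      rw [norm_mul, norm_fresnelKernel]
      exact mul_le_mul_of_nonneg_left (norm_exp_le_exp_of_norm_le (hC p)) (abs_nonneg _))
    (fun q => by
      rw [norm_mul, norm_conj, norm_fresnelKernel, mul_comm]
      exact mul_le_mul_of_nonneg_left
        (norm_exp_le_exp_of_norm_le ((norm_conj _).trans_le (hC q))) (abs_nonneg _))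
  simpa only [← mul_assoc, Function.uncurry_def] using h

theorem propagated_covariance_fourier_form_general {m : ℕ}
    (fr : ℝ) (hfr : 0 < fr)
    (K : Em m → Em m → ℂ)
    (hKcont : Continuous fun pq : Em m × Em m => K pq.1 pq.2)
    (hKsupp : HasCompactSupport fun pq : Em m × Em m => K pq.1 pq.2)
    (f : Em m → ℂ) (hf : Measurable f)
    (hb : ∃ C : ℝ, ∀ x : Em m, ‖f x‖ ≤ C)
    (x y : Em m) :
    (∫ q : Em m, ∫ p : Em m,
        fresnelKernel m fr (x - p) * Complex.exp (f p) * K p q *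
          Complex.exp ((starRingEnd ℂ) (f q)) *
          (starRingEnd ℂ) (fresnelKernel m fr (y - q)))
      = chirp m fr x * FT2m m (kerF m fr K f) (fr • x) (-(fr • y)) *
        (starRingEnd ℂ) (chirp m fr y) := by
  obtain ⟨C, hC⟩ := hb
  have hK : Integrable (fun pq : Em m × Em m => K pq.1 pq.2) (volume.prod volume) :=
    hKcont.integrable_of_hasCompactSupport hKsupp
  rw [← integral_integral_swap (integrable_fresnelKernel_sandwich hK hf hC x y)]
  simp_rw [fresnelKernel_sandwich_eq_kerF hfr, integral_const_mul, FT2m]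
  ring

/-- Fourier form of the propagated covariance kernel:
`∫∫ k_𝔣(x−p)·e^{f(p)}·K(p,q)·e^{conj(f(q))}·conj(k_𝔣(y−q)) dp dq
  = n_𝔣(x)·𝓕_{2m}(K_f)(𝔣x, −𝔣y)·conj(n_𝔣(y))`. -/
theorem propagated_covariance_fourier_form {m : ℕ} (hm : 1 ≤ m)
    (fr : ℝ) (hfr : 0 < fr)
    (K : Em m → Em m → ℂ)
    (hKcont : Continuous fun pq : Em m × Em m => K pq.1 pq.2)
    (hKsupp : HasCompactSupport fun pq : Em m × Em m => K pq.1 pq.2)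
    (f : Em m → ℂ) (hf : Measurable f)
    (hb : ∃ C : ℝ, ∀ x : Em m, ‖f x‖ ≤ C)
    (x y : Em m) :
    (∫ q : Em m, ∫ p : Em m,
        fresnelKernel m fr (x - p) * Complex.exp (f p) * K p q *
          Complex.exp ((starRingEnd ℂ) (f q)) *
          (starRingEnd ℂ) (fresnelKernel m fr (y - q)))
      = chirp m fr x * FT2m m (kerF m fr K f) (fr • x) (-(fr • y)) *
        (starRingEnd ℂ) (chirp m fr y) :=
  propagated_covariance_fourier_form_general fr hfr K hKcont hKsupp f hf hb x y

end
end

section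
/- Isserlis-type covariance identity for circularly symmetric complex Gaussian pairs. Let (Ω, P) be a probability space and let X, Y : Ω → ℂ be measurable random variables such that the joint law of (X,Y) on ℂ² (viewed as a four-dimensional real Banach space) is a Gaussian measure, the pair is circularly symmetric (for every θ ∈ ℝ the joint law of (exp(iθ)·X, exp(iθ)·Y) equals the joint law of (X,Y)), and E[|X|⁴] < ∞, E[|Y|⁴] < ∞. Then Cov(|X|², |Y|²) = |E[X·conj(Y)]|²; that is, E[|X|²·|Y|²] − E[|X|²]·E[|Y|²] = |E[X·conj(Y)]|². -/
/-!
Write `X = a + ib`, `Y = c + id`. Every real linear functional `L` of `(X, Y)` is Gaussian, and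
centred because the law is invariant under `(X, Y) ↦ (-X, -Y)` (rotation by `π`), so
`E[L⁴] = 3 E[L²]²`. Polarizing this quartic identity in two functionals gives Isserlis'
formula `E[U²V²] = E[U²] E[V²] + 2 E[UV]²` for `U ∈ {a, b}`, `V ∈ {c, d}`; summing,
`Cov(|X|², |Y|²) = |E[X Ȳ]|² + |E[X Y]|²`. Rotation by `π/2` gives `E[X Y] = -E[X Y] = 0`.
-/

open MeasureTheory Complex ProbabilityTheory Real
open scoped NNReal ENNReal ComplexConjugate

lemma hasDerivAt_mul_exp_mul_sq_div_two {p : ℝ → ℝ} {p' c t : ℝ} (hp : HasDerivAt p p' t) :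
    HasDerivAt (fun s ↦ p s * rexp (c * s ^ 2 / 2))
      ((p' + c * t * p t) * rexp (c * t ^ 2 / 2)) t := by
  have hexp : HasDerivAt (fun s ↦ rexp (c * s ^ 2 / 2)) (rexp (c * t ^ 2 / 2) * (c * t)) t := by
    convert (((hasDerivAt_pow 2 t).const_mul c).div_const 2).exp using 1
    push_cast
    ring
  exact (hp.mul hexp).congr_deriv (by ring)

lemma integral_pow_gaussianReal_zero_eq_iteratedDeriv (v : ℝ≥0) (n : ℕ) :
    ∫ x, x ^ n ∂gaussianReal 0 v = iteratedDeriv n (fun t ↦ rexp (v * t ^ 2 / 2)) 0 := by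
  have := iteratedDeriv_mgf_zero (X := fun x ↦ x) (μ := gaussianReal 0 v) (by simp) n
  simpa [mgf_fun_id_gaussianReal] using this.symm

lemma integral_sq_gaussianReal_zero (v : ℝ≥0) : ∫ x, x ^ 2 ∂gaussianReal 0 v = v := by
  have := variance_fun_id_gaussianReal (μ := 0) (v := v)
  rw [variance_eq_integral measurable_id'.aemeasurable] at this
  simpa using this

lemma integral_pow_four_gaussianReal_zero (v : ℝ≥0) :
    ∫ x, x ^ 4 ∂gaussianReal 0 v = 3 * (v : ℝ) ^ 2 := by
  set c : ℝ := (v : ℝ)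
  have deriv_eq {p p' q : ℝ → ℝ} (hp : ∀ t, HasDerivAt p (p' t) t)
      (hq : ∀ t, p' t + c * t * p t = q t) :
      deriv (fun s ↦ p s * rexp (c * s ^ 2 / 2)) = fun t ↦ q t * rexp (c * t ^ 2 / 2) :=
    funext fun t ↦ by rw [(hasDerivAt_mul_exp_mul_sq_div_two (hp t)).deriv, hq]
  rw [integral_pow_gaussianReal_zero_eq_iteratedDeriv,
    ← funext fun t ↦ one_mul (rexp (c * t ^ 2 / 2))]
  simp only [iteratedDeriv_succ', iteratedDeriv_zero]
  rw [deriv_eq (q := fun t ↦ c * t) (fun t ↦ hasDerivAt_const t 1) fun t ↦ by ring,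
    deriv_eq (p := fun t ↦ c * t) (q := fun t ↦ c + c ^ 2 * t ^ 2)
      (fun t ↦ (hasDerivAt_id t).const_mul c) fun t ↦ by ring,
    deriv_eq (p := fun t ↦ c + c ^ 2 * t ^ 2) (q := fun t ↦ 3 * c ^ 2 * t + c ^ 3 * t ^ 3)
      (fun t ↦ ((hasDerivAt_pow 2 t).const_mul (c ^ 2)).const_add c) fun t ↦ by ring,
    deriv_eq (p := fun t ↦ 3 * c ^ 2 * t + c ^ 3 * t ^ 3)
      (q := fun t ↦ 3 * c ^ 2 + 6 * c ^ 3 * t ^ 2 + c ^ 4 * t ^ 4)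
      (fun t ↦ ((hasDerivAt_id t).const_mul _).add ((hasDerivAt_pow 3 t).const_mul (c ^ 3)))
      fun t ↦ by ring]
  simp

section Polarization

variable {Ω : Type*} [MeasurableSpace Ω] {μ : Measure Ω}

lemma MeasureTheory.MemLp.integrable_pow_four {U : Ω → ℝ} (hU : MemLp U 4 μ) :
    Integrable (fun x ↦ U x ^ 4) μ := by
  simpa [(by decide : Even 4).pow_abs] using hU.integrable_norm_pow (p := 4) (by norm_num)

lemma MeasureTheory.MemLp.integrable_mul_of_four {𝕜 : Type*} [NormedRing 𝕜] [IsFiniteMeasure μ]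
    {f g : Ω → 𝕜} (hf : MemLp f 4 μ) (hg : MemLp g 4 μ) : Integrable (fun x ↦ f x * g x) μ :=
  (hf.mono_exponent (by norm_num : (2 : ℝ≥0∞) ≤ 4)).integrable_mul
    (hg.mono_exponent (by norm_num : (2 : ℝ≥0∞) ≤ 4))

lemma MeasureTheory.MemLp.integrable_sq_mul_sq {U V : Ω → ℝ} (hU : MemLp U 4 μ)
    (hV : MemLp V 4 μ) : Integrable (fun x ↦ U x ^ 2 * V x ^ 2) μ := by
  refine ((hU.integrable_pow_four.add hV.integrable_pow_four).div_const 2).mono'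
    ((hU.1.pow 2).mul (hV.1.pow 2)) (.of_forall fun x ↦ ?_)
  rw [Real.norm_of_nonneg (by positivity)]
  show _ ≤ (U x ^ 4 + V x ^ 4) / 2
  nlinarith [sq_nonneg (U x ^ 2 - V x ^ 2)]

lemma integral_sq_mul_sq_eq_of_integral_pow_four [IsFiniteMeasure μ] {U V : Ω → ℝ}
    (hU : MemLp U 4 μ) (hV : MemLp V 4 μ)
    (h : ∀ a b : ℝ, ∫ x, (a * U x + b * V x) ^ 4 ∂μ = 3 * (∫ x, (a * U x + b * V x) ^ 2 ∂μ) ^ 2) :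
    ∫ x, U x ^ 2 * V x ^ 2 ∂μ
      = (∫ x, U x ^ 2 ∂μ) * (∫ x, V x ^ 2 ∂μ) + 2 * (∫ x, U x * V x ∂μ) ^ 2 := by
  have sq_expand (a b : ℝ) : ∫ x, (a * U x + b * V x) ^ 2 ∂μ
      = a ^ 2 * ∫ x, U x ^ 2 ∂μ + 2 * a * b * ∫ x, U x * V x ∂μ + b ^ 2 * ∫ x, V x ^ 2 ∂μ := by
    have hUU : Integrable (fun x ↦ U x ^ 2) μ := by simpa [sq] using hU.integrable_mul_of_four hU
    have hVV : Integrable (fun x ↦ V x ^ 2) μ := by simpa [sq] using hV.integrable_mul_of_four hV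
    have hUV := hU.integrable_mul_of_four hV
    have hfun : (fun x ↦ (a * U x + b * V x) ^ 2)
        = fun x ↦ a ^ 2 * U x ^ 2 + 2 * a * b * (U x * V x) + b ^ 2 * V x ^ 2 :=
      funext fun x ↦ by ring
    rw [hfun, integral_add _ (hVV.const_mul _), integral_add (hUU.const_mul _) (hUV.const_mul _),
      integral_const_mul, integral_const_mul, integral_const_mul]
    exact (hUU.const_mul _).add (hUV.const_mul _)
  have pow_four (a b : ℝ) : Integrable (fun x ↦ (a * U x + b * V x) ^ 4) μ :=
    ((hU.const_mul a).add (hV.const_mul b)).integrable_pow_four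
  -- polarization of the quartic form: `(u + v)⁴ + (u - v)⁴ - 2u⁴ - 2v⁴ = 12 u²v²`
  have quartic : ∫ x, U x ^ 2 * V x ^ 2 ∂μ
      = (∫ x, (1 * U x + 1 * V x) ^ 4 ∂μ + ∫ x, (1 * U x + -1 * V x) ^ 4 ∂μ
        - 2 * ∫ x, (1 * U x + 0 * V x) ^ 4 ∂μ - 2 * ∫ x, (0 * U x + 1 * V x) ^ 4 ∂μ) / 12 := by
    have hfun : (fun x ↦ U x ^ 2 * V x ^ 2) = fun x ↦ ((1 * U x + 1 * V x) ^ 4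
        + (1 * U x + -1 * V x) ^ 4 - 2 * (1 * U x + 0 * V x) ^ 4
        - 2 * (0 * U x + 1 * V x) ^ 4) / 12 :=
      funext fun x ↦ by ring
    rw [hfun, integral_div, integral_sub _ ((pow_four 0 1).const_mul 2),
      integral_sub _ ((pow_four 1 0).const_mul 2), integral_add (pow_four 1 1) (pow_four 1 (-1)),
      integral_const_mul, integral_const_mul]
    · exact (pow_four 1 1).add (pow_four 1 (-1))
    · exact ((pow_four 1 1).add (pow_four 1 (-1))).sub ((pow_four 1 0).const_mul 2)
  rw [quartic, h, h, h, h, sq_expand, sq_expand, sq_expand, sq_expand]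
  ring

end Polarization

section SymmetricGaussian

variable {E : Type*} [NormedAddCommGroup E] [NormedSpace ℝ E] [MeasurableSpace E] [BorelSpace E]
  {μ : Measure E}

lemma eq_zero_of_map_eq_gaussianReal_of_map_neg_eq_self (hneg : μ.map (fun x ↦ -x) = μ)
    {L : E →L[ℝ] ℝ} {m : ℝ} {v : ℝ≥0} (hL : μ.map L = gaussianReal m v) : m = 0 := by
  have : gaussianReal m v = gaussianReal (-m) v :=
    calc gaussianReal m v = (μ.map (fun x ↦ -x)).map L := by rw [hneg, hL]
      _ = (μ.map L).map (fun y ↦ -y) := by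
        rw [Measure.map_map L.measurable continuous_neg.measurable,
          Measure.map_map measurable_neg L.measurable]
        congr 1 with x
        simp
      _ = gaussianReal (-m) v := by rw [hL, gaussianReal_map_neg]
  linarith [(gaussianReal_ext_iff.mp this).1]

lemma integral_pow_four_eq_of_map_eq_gaussianReal (hneg : μ.map (fun x ↦ -x) = μ)
    {L : E →L[ℝ] ℝ} {m : ℝ} {v : ℝ≥0} (hL : μ.map L = gaussianReal m v) :
    ∫ x, L x ^ 4 ∂μ = 3 * (∫ x, L x ^ 2 ∂μ) ^ 2 := by
  obtain rfl := eq_zero_of_map_eq_gaussianReal_of_map_neg_eq_self hneg hL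
  have moment (n : ℕ) : ∫ x, L x ^ n ∂μ = ∫ y, y ^ n ∂gaussianReal 0 v := by
    rw [← hL, integral_map L.measurable.aemeasurable (by fun_prop)]
  rw [moment, moment, integral_pow_four_gaussianReal_zero, integral_sq_gaussianReal_zero]

lemma integral_sq_mul_sq_eq_of_map_eq_gaussianReal [IsFiniteMeasure μ]
    (hgauss : ∀ L : E →L[ℝ] ℝ, ∃ (m : ℝ) (v : ℝ≥0), μ.map L = gaussianReal m v)
    (hneg : μ.map (fun x ↦ -x) = μ) (h4 : MemLp id 4 μ) (S T : E →L[ℝ] ℝ) :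
    ∫ x, S x ^ 2 * T x ^ 2 ∂μ
      = (∫ x, S x ^ 2 ∂μ) * (∫ x, T x ^ 2 ∂μ) + 2 * (∫ x, S x * T x ∂μ) ^ 2 := by
  refine integral_sq_mul_sq_eq_of_integral_pow_four (S.comp_memLp' h4) (T.comp_memLp' h4)
    fun a b ↦ ?_
  obtain ⟨m, v, hL⟩ := hgauss (a • S + b • T)
  simpa using integral_pow_four_eq_of_map_eq_gaussianReal hneg hL

end SymmetricGaussian

section ComplexMoments

variable {Ω : Type*} [MeasurableSpace Ω] {μ : Measure Ω} {f g : Ω → ℂ}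

lemma integral_sq_norm_eq (hf : MemLp f 2 μ) :
    ∫ x, ‖f x‖ ^ 2 ∂μ = ∫ x, (f x).re ^ 2 ∂μ + ∫ x, (f x).im ^ 2 ∂μ := by
  simp only [Complex.sq_norm, normSq_apply, ← sq]
  exact integral_add (reCLM.comp_memLp' hf).integrable_sq (imCLM.comp_memLp' hf).integrable_sq

lemma integral_sq_norm_mul_sq_norm_eq (hf : MemLp f 4 μ) (hg : MemLp g 4 μ) :
    ∫ x, ‖f x‖ ^ 2 * ‖g x‖ ^ 2 ∂μ
      = ∫ x, (f x).re ^ 2 * (g x).re ^ 2 ∂μ + ∫ x, (f x).re ^ 2 * (g x).im ^ 2 ∂μ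
        + ∫ x, (f x).im ^ 2 * (g x).re ^ 2 ∂μ + ∫ x, (f x).im ^ 2 * (g x).im ^ 2 ∂μ := by
  have ha : MemLp (fun x ↦ (f x).re) 4 μ := reCLM.comp_memLp' hf
  have hb : MemLp (fun x ↦ (f x).im) 4 μ := imCLM.comp_memLp' hf
  have hc : MemLp (fun x ↦ (g x).re) 4 μ := reCLM.comp_memLp' hg
  have hd : MemLp (fun x ↦ (g x).im) 4 μ := imCLM.comp_memLp' hg
  have hfun : (fun x ↦ ‖f x‖ ^ 2 * ‖g x‖ ^ 2) = fun x ↦ (f x).re ^ 2 * (g x).re ^ 2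
      + (f x).re ^ 2 * (g x).im ^ 2 + (f x).im ^ 2 * (g x).re ^ 2 + (f x).im ^ 2 * (g x).im ^ 2 :=
    funext fun x ↦ by simp only [Complex.sq_norm, normSq_apply]; ring
  rw [hfun, integral_add _ (hb.integrable_sq_mul_sq hd),
    integral_add _ (hb.integrable_sq_mul_sq hc), integral_add (ha.integrable_sq_mul_sq hc) (ha.integrable_sq_mul_sq hd)]
  · exact (ha.integrable_sq_mul_sq hc).add (ha.integrable_sq_mul_sq hd)
  · exact ((ha.integrable_sq_mul_sq hc).add (ha.integrable_sq_mul_sq hd)).add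
      (hb.integrable_sq_mul_sq hc)

lemma sq_norm_integral_eq (hf : Integrable f μ) :
    ‖∫ x, f x ∂μ‖ ^ 2 = (∫ x, (f x).re ∂μ) ^ 2 + (∫ x, (f x).im ∂μ) ^ 2 := by
  rw [Complex.sq_norm, normSq_apply, ← sq, ← sq, ← reCLM_apply, ← reCLM.integral_comp_comm hf,
    ← imCLM_apply, ← imCLM.integral_comp_comm hf]
  rfl

lemma sq_norm_integral_mul_conj_add_sq_norm_integral_mul [IsFiniteMeasure μ] (hf : MemLp f 4 μ)
    (hg : MemLp g 4 μ) :
    ‖∫ x, f x * conj (g x) ∂μ‖ ^ 2 + ‖∫ x, f x * g x ∂μ‖ ^ 2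
      = 2 * ((∫ x, (f x).re * (g x).re ∂μ) ^ 2 + (∫ x, (f x).re * (g x).im ∂μ) ^ 2
        + (∫ x, (f x).im * (g x).re ∂μ) ^ 2 + (∫ x, (f x).im * (g x).im ∂μ) ^ 2) := by
  have hac := (reCLM.comp_memLp' hf).integrable_mul_of_four (reCLM.comp_memLp' hg)
  have had := (reCLM.comp_memLp' hf).integrable_mul_of_four (imCLM.comp_memLp' hg)
  have hbc := (imCLM.comp_memLp' hf).integrable_mul_of_four (reCLM.comp_memLp' hg)
  have hbd := (imCLM.comp_memLp' hf).integrable_mul_of_four (imCLM.comp_memLp' hg)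
  simp only [Function.comp_apply, reCLM_apply, imCLM_apply] at hac had hbc hbd
  have hg' : MemLp (fun x ↦ conj (g x)) 4 μ := conjCLE.toContinuousLinearMap.comp_memLp' hg
  rw [sq_norm_integral_eq (hf.integrable_mul_of_four hg'),
    sq_norm_integral_eq (hf.integrable_mul_of_four hg)]
  simp only [mul_re, mul_im, conj_re, conj_im, mul_neg, sub_neg_eq_add, neg_add_eq_sub]
  rw [integral_add hac hbd, integral_sub hbc had, integral_sub hac hbd, integral_add had hbc]
  ring

end ComplexMoments

section ComplexPair

variable {μ : Measure (ℂ × ℂ)}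

lemma integral_sq_norm_mul_sq_norm_sub_of_map_eq_gaussianReal [IsFiniteMeasure μ]
    (hgauss : ∀ L : (ℂ × ℂ) →L[ℝ] ℝ, ∃ (m : ℝ) (v : ℝ≥0), μ.map L = gaussianReal m v)
    (hneg : μ.map (fun p ↦ -p) = μ) (h4 : MemLp id 4 μ) :
    ∫ p, ‖p.1‖ ^ 2 * ‖p.2‖ ^ 2 ∂μ - (∫ p, ‖p.1‖ ^ 2 ∂μ) * (∫ p, ‖p.2‖ ^ 2 ∂μ)
      = ‖∫ p, p.1 * conj p.2 ∂μ‖ ^ 2 + ‖∫ p, p.1 * p.2 ∂μ‖ ^ 2 := by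
  have isserlis := integral_sq_mul_sq_eq_of_map_eq_gaussianReal hgauss hneg h4
  have hac := isserlis (reCLM.comp (.fst ℝ ℂ ℂ)) (reCLM.comp (.snd ℝ ℂ ℂ))
  have had := isserlis (reCLM.comp (.fst ℝ ℂ ℂ)) (imCLM.comp (.snd ℝ ℂ ℂ))
  have hbc := isserlis (imCLM.comp (.fst ℝ ℂ ℂ)) (reCLM.comp (.snd ℝ ℂ ℂ))
  have hbd := isserlis (imCLM.comp (.fst ℝ ℂ ℂ)) (imCLM.comp (.snd ℝ ℂ ℂ))
  simp only [ContinuousLinearMap.comp_apply, ContinuousLinearMap.coe_fst',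
    ContinuousLinearMap.coe_snd', reCLM_apply, imCLM_apply] at hac had hbc hbd
  have h₁ : MemLp (fun p : ℂ × ℂ ↦ p.1) 4 μ := (ContinuousLinearMap.fst ℝ ℂ ℂ).comp_memLp' h4
  have h₂ : MemLp (fun p : ℂ × ℂ ↦ p.2) 4 μ := (ContinuousLinearMap.snd ℝ ℂ ℂ).comp_memLp' h4
  rw [sq_norm_integral_mul_conj_add_sq_norm_integral_mul h₁ h₂,
    integral_sq_norm_mul_sq_norm_eq h₁ h₂, integral_sq_norm_eq (h₁.mono_exponent (by norm_num)),
    integral_sq_norm_eq (h₂.mono_exponent (by norm_num)), hac, had, hbc, hbd]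
  ring

lemma map_neg_eq_self_of_map_I_smul_eq_self (hrot : μ.map (fun p ↦ I • p) = μ) :
    μ.map (fun p ↦ -p) = μ := by
  have hmeas : Measurable fun p : ℂ × ℂ ↦ I • p := (continuous_const_smul I).measurable
  calc μ.map (fun p ↦ -p) = (μ.map (fun p ↦ I • p)).map (fun p ↦ I • p) := by
        rw [Measure.map_map hmeas hmeas]
        congr 1
        funext p
        simp [smul_smul]
    _ = μ := by rw [hrot, hrot]

lemma integral_fst_mul_snd_eq_zero_of_map_I_smul_eq_self (hrot : μ.map (fun p ↦ I • p) = μ) :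
    ∫ p, p.1 * p.2 ∂μ = 0 := by
  have h : ∫ p, p.1 * p.2 ∂μ = ∫ p, (I • p).1 * (I • p).2 ∂μ := by
    conv_lhs => rw [← hrot]
    exact integral_map (continuous_const_smul I).aemeasurable (by fun_prop)
  have hmul (p : ℂ × ℂ) : (I • p).1 * (I • p).2 = -(p.1 * p.2) := by
    simp only [Prod.smul_fst, Prod.smul_snd, smul_eq_mul]
    linear_combination (p.1 * p.2) * I_sq
  rw [funext hmul, integral_neg] at h
  exact self_eq_neg.mp h

end ComplexPair

/-- Isserlis-type covariance identity for circularly symmetric complex Gaussian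
pairs: if the joint law of `(X,Y)` on `ℂ²` is Gaussian (every continuous real
linear functional pushes it forward to a, possibly degenerate, Gaussian measure
on `ℝ`), the pair is circularly symmetric, and fourth moments are finite, then
`Cov(|X|², |Y|²) = |E[X·conj(Y)]|²`. -/
theorem isserlis_covariance_identity
    {Ω : Type*} [MeasurableSpace Ω] (P : Measure Ω) [IsProbabilityMeasure P]
    (X Y : Ω → ℂ) (hX : Measurable X) (hY : Measurable Y)
    (hgauss : ∀ L : (ℂ × ℂ) →L[ℝ] ℝ, ∃ (μ : ℝ) (σ : NNReal),
      Measure.map L (Measure.map (fun ω => (X ω, Y ω)) P) = gaussianReal μ σ)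
    (hcirc : ∀ θ : ℝ,
      Measure.map (fun ω => (Complex.exp (Complex.I * θ) * X ω,
        Complex.exp (Complex.I * θ) * Y ω)) P
        = Measure.map (fun ω => (X ω, Y ω)) P)
    (hX4 : MemLp X 4 P) (hY4 : MemLp Y 4 P) :
    (∫ ω, ‖X ω‖ ^ 2 * ‖Y ω‖ ^ 2 ∂P)
        - (∫ ω, ‖X ω‖ ^ 2 ∂P) * (∫ ω, ‖Y ω‖ ^ 2 ∂P)
      = ‖∫ ω, X ω * (starRingEnd ℂ) (Y ω) ∂P‖ ^ 2 := by
  have hZ : Measurable fun ω ↦ (X ω, Y ω) := hX.prodMk hY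
  set μ := P.map fun ω ↦ (X ω, Y ω)
  have : IsProbabilityMeasure μ := Measure.isProbabilityMeasure_map hZ.aemeasurable
  have hrot : μ.map (fun p ↦ I • p) = μ := by
    rw [Measure.map_map (continuous_const_smul I).measurable hZ, ← hcirc (π / 2)]
    congr 1 with ω <;> simp [mul_comm I, exp_pi_div_two_mul_I]
  have h4 : MemLp id 4 μ := (memLp_map_measure_iff aestronglyMeasurable_id hZ.aemeasurable).2
    (memLp_prod_iff.2 ⟨hX4, hY4⟩)
  have key := integral_sq_norm_mul_sq_norm_sub_of_map_eq_gaussianReal hgauss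
    (map_neg_eq_self_of_map_I_smul_eq_self hrot) h4
  rw [integral_fst_mul_snd_eq_zero_of_map_I_smul_eq_self hrot, norm_zero,
    zero_pow two_ne_zero, add_zero] at key
  rwa [integral_map hZ.aemeasurable (by fun_prop), integral_map hZ.aemeasurable (by fun_prop),
    integral_map hZ.aemeasurable (by fun_prop), integral_map hZ.aemeasurable (by fun_prop)] at key
end
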